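/- For all l ∈ [0, π_2/2], ∫_0^l cleaf_2(t) dt = arctan(sleaf_2(l)). -/

import Mathlib

open Real Set MeasureTheory intervalIntegral

/-!
Write `F x = ∫₀ˣ dt / √(1 - t⁴)`, so that `sleaf = F⁻¹` and
`cleaf l = F⁻¹ (F 1 - l)`. The map `g x = √((1 - x²) / (1 + x²))` satisfies
`F (g x) = F 1 - F x`, since `F + F ∘ g` has derivative zero on `(0, 1)`;
hence `cleaf (F x) = g x`. Substituting `t = F x` turns `∫₀ˡ cleaf` into
`∫₀^σ g x / √(1 - x⁴) dx` with `σ = sleaf l`, and `g x / √(1 - x⁴) = 1 / (1 + x²)`.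
-/

lemma intervalIntegrable_one_div_sqrt_one_sub_pow_four {a b : ℝ} (ha : a ∈ Icc (0:ℝ) 1)
    (hb : b ∈ Icc (0:ℝ) 1) :
    IntervalIntegrable (fun t : ℝ => 1 / √(1 - t ^ 4)) volume a b := by
  suffices h : IntervalIntegrable (fun t : ℝ => 1 / √(1 - t ^ 4)) volume 0 1 from
    h.mono_set (by rw [uIcc_of_le zero_le_one]; exact uIcc_subset_Icc ha hb)
  -- near `t = 1`, `1 - t ^ 4 ≥ 1 - t`, so the integrand is dominated by `(1 - t) ^ (-1/2)`
  have hdom : IntervalIntegrable (fun t : ℝ => (1 - t) ^ (-(1 / 2) : ℝ)) volume 0 1 := by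
    simpa using ((intervalIntegrable_rpow' (a := 0) (b := 1) (r := (-(1 / 2) : ℝ))
      (by norm_num)).comp_sub_left 1).symm
  rw [intervalIntegrable_iff_integrableOn_Ioc_of_le zero_le_one] at hdom ⊢
  refine hdom.mono' (Measurable.aestronglyMeasurable (by fun_prop)) ?_
  filter_upwards [ae_restrict_mem measurableSet_Ioc] with t ⟨ht0, ht1⟩
  rw [norm_of_nonneg (by positivity), rpow_neg (by linarith), ← sqrt_eq_rpow, one_div]
  rcases ht1.eq_or_lt with rfl | ht1
  · simp
  · refine inv_anti₀ (sqrt_pos.2 (by linarith)) (sqrt_le_sqrt ?_)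
    nlinarith [pow_le_one₀ ht0.le ht1.le (n := 3)]

noncomputable def arcsleaf (x : ℝ) : ℝ := ∫ t in (0:ℝ)..x, 1 / √(1 - t ^ 4)

@[simp] lemma arcsleaf_zero : arcsleaf 0 = 0 := integral_same

lemma arcsleaf_sub_arcsleaf {a b : ℝ} (ha : a ∈ Icc (0:ℝ) 1) (hb : b ∈ Icc (0:ℝ) 1) :
    arcsleaf b - arcsleaf a = ∫ t in a..b, 1 / √(1 - t ^ 4) :=
  integral_interval_sub_left
    (intervalIntegrable_one_div_sqrt_one_sub_pow_four (left_mem_Icc.2 zero_le_one) hb)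
    (intervalIntegrable_one_div_sqrt_one_sub_pow_four (left_mem_Icc.2 zero_le_one) ha)

lemma hasDerivAt_arcsleaf {x : ℝ} (hx : x ∈ Ioo (0:ℝ) 1) :
    HasDerivAt arcsleaf (1 / √(1 - x ^ 4)) x := by
  have hx4 : x ^ 4 < 1 := pow_lt_one₀ hx.1.le hx.2 (by norm_num)
  refine integral_hasDerivAt_right
    (intervalIntegrable_one_div_sqrt_one_sub_pow_four (left_mem_Icc.2 zero_le_one)
      (Ioo_subset_Icc_self hx))
    (Measurable.aestronglyMeasurable (by fun_prop)).stronglyMeasurableAtFilter ?_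
  exact continuousAt_const.div (by fun_prop) (sqrt_pos.2 (by linarith)).ne'

lemma continuousOn_arcsleaf : ContinuousOn arcsleaf (Icc 0 1) := by
  have h : ContinuousOn arcsleaf (uIcc 0 1) := continuousOn_primitive_interval'
    (intervalIntegrable_one_div_sqrt_one_sub_pow_four (left_mem_Icc.2 zero_le_one)
      (right_mem_Icc.2 zero_le_one)) left_mem_uIcc
  rwa [uIcc_of_le zero_le_one] at h

lemma strictMonoOn_arcsleaf : StrictMonoOn arcsleaf (Icc 0 1) := by
  refine strictMonoOn_of_deriv_pos (convex_Icc 0 1) continuousOn_arcsleaf fun x hx => ?_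
  rw [interior_Icc] at hx
  rw [(hasDerivAt_arcsleaf hx).deriv]
  have hx4 : x ^ 4 < 1 := pow_lt_one₀ hx.1.le hx.2 (by norm_num)
  exact one_div_pos.2 (sqrt_pos.2 (by linarith))

noncomputable def cleafOfSleaf (x : ℝ) : ℝ := √((1 - x ^ 2) / (1 + x ^ 2))

@[simp] lemma cleafOfSleaf_zero : cleafOfSleaf 0 = 1 := by simp [cleafOfSleaf]

lemma cleafOfSleaf_mem_Icc (x : ℝ) : cleafOfSleaf x ∈ Icc (0:ℝ) 1 :=
  ⟨sqrt_nonneg _, sqrt_le_one.2 ((div_le_one (by positivity)).2 (by nlinarith [sq_nonneg x]))⟩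

lemma continuous_cleafOfSleaf : Continuous cleafOfSleaf :=
  continuous_sqrt.comp <| by fun_prop (disch := intro x; positivity)

lemma cleafOfSleaf_pos {x : ℝ} (hx : x ^ 2 < 1) : 0 < cleafOfSleaf x :=
  sqrt_pos.2 (div_pos (by linarith) (by positivity))

lemma cleafOfSleaf_lt_one {x : ℝ} (hx : x ≠ 0) : cleafOfSleaf x < 1 :=
  (sqrt_lt' one_pos).2 <| by
    rw [one_pow, div_lt_one (by positivity)]
    linarith [pow_pos (abs_pos.2 hx) 2, sq_abs x]

lemma sqrt_one_sub_pow_four {x : ℝ} (hx : x ^ 2 ≤ 1) :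
    √(1 - x ^ 4) = √(1 - x ^ 2) * √(1 + x ^ 2) := by
  rw [← sqrt_mul (by linarith)]; ring_nf

lemma one_div_sqrt_one_sub_pow_four_mul_cleafOfSleaf {x : ℝ} (hx : x ^ 2 < 1) :
    1 / √(1 - x ^ 4) * cleafOfSleaf x = 1 / (1 + x ^ 2) := by
  have h₁ : 0 < √(1 - x ^ 2) := sqrt_pos.2 (by linarith)
  have h₂ : 0 < √(1 + x ^ 2) := sqrt_pos.2 (by positivity)
  rw [cleafOfSleaf, sqrt_div (by linarith), sqrt_one_sub_pow_four hx.le]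
  field_simp
  rw [sq_sqrt (by positivity)]

lemma sqrt_one_sub_cleafOfSleaf_pow_four {x : ℝ} (hx : x ∈ Icc (0:ℝ) 1) :
    √(1 - cleafOfSleaf x ^ 4) = 2 * x / (1 + x ^ 2) := by
  have hsq : cleafOfSleaf x ^ 2 = (1 - x ^ 2) / (1 + x ^ 2) :=
    sq_sqrt (div_nonneg (by nlinarith [hx.1, hx.2]) (by positivity))
  rw [show cleafOfSleaf x ^ 4 = (cleafOfSleaf x ^ 2) ^ 2 by ring, hsq,
    show 1 - ((1 - x ^ 2) / (1 + x ^ 2)) ^ 2 = (2 * x / (1 + x ^ 2)) ^ 2 by field_simp; ring]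
  exact sqrt_sq (by have := hx.1; positivity)

lemma hasDerivAt_cleafOfSleaf {x : ℝ} (hx : x ^ 2 < 1) :
    HasDerivAt cleafOfSleaf (-2 * x / ((1 + x ^ 2) ^ 2 * cleafOfSleaf x)) x := by
  have hr : HasDerivAt (fun y : ℝ => (1 - y ^ 2) / (1 + y ^ 2)) (-4 * x / (1 + x ^ 2) ^ 2) x :=
    (((hasDerivAt_pow 2 x).const_sub 1).div ((hasDerivAt_pow 2 x).const_add 1)
      (by positivity)).congr_deriv (by ring)
  refine (hr.sqrt (div_pos (by linarith) (by positivity)).ne').congr_deriv ?_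
  have hg := cleafOfSleaf_pos hx
  rw [cleafOfSleaf] at hg ⊢
  field_simp
  ring

lemma hasDerivAt_arcsleaf_comp_cleafOfSleaf {x : ℝ} (hx : x ∈ Ioo (0:ℝ) 1) :
    HasDerivAt (arcsleaf ∘ cleafOfSleaf) (-(1 / √(1 - x ^ 4))) x := by
  have hx2 : x ^ 2 < 1 := by nlinarith [hx.1, hx.2]
  have hg := cleafOfSleaf_pos hx2
  have hs : 0 < √(1 - x ^ 4) := sqrt_pos.2 (by nlinarith)
  have hgs := one_div_sqrt_one_sub_pow_four_mul_cleafOfSleaf hx2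
  refine ((hasDerivAt_arcsleaf ⟨hg, cleafOfSleaf_lt_one hx.1.ne'⟩).comp x
    (hasDerivAt_cleafOfSleaf hx2)).congr_deriv ?_
  rw [sqrt_one_sub_cleafOfSleaf_pow_four (Ioo_subset_Icc_self hx)]
  field_simp at hgs ⊢
  rw [hgs, mul_div_cancel_left₀ _ hx.1.ne']

lemma arcsleaf_cleafOfSleaf {x : ℝ} (hx : x ∈ Icc (0:ℝ) 1) :
    arcsleaf (cleafOfSleaf x) = arcsleaf 1 - arcsleaf x := by
  rcases hx.1.eq_or_lt with rfl | hx₀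
  · simp
  have hcont : ContinuousOn (fun y => arcsleaf y + arcsleaf (cleafOfSleaf y)) (Icc 0 x) :=
    (continuousOn_arcsleaf.add (continuousOn_arcsleaf.comp continuous_cleafOfSleaf.continuousOn
      fun y _ => cleafOfSleaf_mem_Icc y)).mono (Icc_subset_Icc_right hx.2)
  obtain ⟨c, -, hc⟩ := exists_hasDerivAt_eq_slope _ (fun _ => (0:ℝ)) hx₀ hcont fun y hy =>
    ((hasDerivAt_arcsleaf ⟨hy.1, hy.2.trans_le hx.2⟩).add
      (hasDerivAt_arcsleaf_comp_cleafOfSleaf ⟨hy.1, hy.2.trans_le hx.2⟩)).congr_deriv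
      (add_neg_cancel _)
  rw [eq_comm, div_eq_zero_iff, sub_eq_zero] at hc
  simp only [sub_zero, hx₀.ne', or_false, arcsleaf_zero, cleafOfSleaf_zero, zero_add] at hc
  linarith

lemma arcsleaf_mem_Icc {x : ℝ} (hx : x ∈ Icc (0:ℝ) 1) : arcsleaf x ∈ Icc 0 (arcsleaf 1) := by
  have h := strictMonoOn_arcsleaf.monotoneOn
  exact ⟨arcsleaf_zero ▸ h (left_mem_Icc.2 zero_le_one) hx hx.1,
    h hx (right_mem_Icc.2 zero_le_one) hx.2⟩

lemma eq_cleafOfSleaf_of_integral_eq {x c : ℝ} (hx : x ∈ Icc (0:ℝ) 1) (hc : c ∈ Icc (0:ℝ) 1)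
    (h : ∫ t in c..1, 1 / √(1 - t ^ 4) = arcsleaf x) : c = cleafOfSleaf x :=
  strictMonoOn_arcsleaf.injOn hc (cleafOfSleaf_mem_Icc x) <| by
    rw [arcsleaf_cleafOfSleaf hx, ← h, ← arcsleaf_sub_arcsleaf hc (right_mem_Icc.2 zero_le_one)]
    ring

lemma integral_comp_arcsleaf {σ : ℝ} (hσ : σ ∈ Icc (0:ℝ) 1) (φ : ℝ → ℝ) :
    ∫ u in (0:ℝ)..arcsleaf σ, φ u = ∫ x in (0:ℝ)..σ, 1 / √(1 - x ^ 4) * φ (arcsleaf x) := by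
  rw [integral_of_le (arcsleaf_mem_Icc hσ).1, integral_of_le hσ.1,
    ← integral_Icc_eq_integral_Ioc, ← integral_Icc_eq_integral_Ioc]
  have hderiv : ∀ x ∈ Ioo 0 σ, HasDerivAt arcsleaf (1 / √(1 - x ^ 4)) x :=
    fun x hx => hasDerivAt_arcsleaf ⟨hx.1, hx.2.trans_le hσ.2⟩
  simpa using (integral_Icc_deriv_smul_of_deriv_nonneg
    (continuousOn_arcsleaf.mono (Icc_subset_Icc_right hσ.2)) hderiv
    (fun x _ => by positivity) hσ.1 (g := φ)).symm

theorem integral_cleaf (π₂ : ℝ) (hπ : π₂ = 2 * ∫ t in (0:ℝ)..1, 1 / Real.sqrt (1 - t ^ 4))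
    (sleaf : ℝ → ℝ)
    (hs : ∀ l ∈ Set.Icc 0 (π₂ / 2), sleaf l ∈ Set.Icc (0:ℝ) 1 ∧
      (∫ t in (0:ℝ)..(sleaf l), 1 / Real.sqrt (1 - t ^ 4)) = l)
    (cleaf : ℝ → ℝ)
    (hc : ∀ l ∈ Set.Icc 0 (π₂ / 2), cleaf l ∈ Set.Icc (0:ℝ) 1 ∧
      (∫ t in (cleaf l)..1, 1 / Real.sqrt (1 - t ^ 4)) = l) :
    ∀ l ∈ Set.Icc 0 (π₂ / 2),
      (∫ t in (0:ℝ)..l, cleaf t) = Real.arctan (sleaf l) := by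
  have hT : π₂ / 2 = arcsleaf 1 := by rw [hπ, arcsleaf]; ring
  rw [hT] at hs hc ⊢
  intro l hl
  obtain ⟨hσ, hσl : arcsleaf (sleaf l) = l⟩ := hs l hl
  have hcleaf : ∀ x ∈ Icc (0:ℝ) 1, cleaf (arcsleaf x) = cleafOfSleaf x := fun x hx =>
    (hc _ (arcsleaf_mem_Icc hx)).elim (eq_cleafOfSleaf_of_integral_eq hx)
  calc ∫ t in (0:ℝ)..l, cleaf t
      = ∫ x in (0:ℝ)..sleaf l, 1 / √(1 - x ^ 4) * cleaf (arcsleaf x) := by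
        rw [← integral_comp_arcsleaf hσ, hσl]
    _ = ∫ x in (0:ℝ)..sleaf l, 1 / (1 + x ^ 2) := by
        refine integral_congr_Ioo_of_le hσ.1 fun x hx => ?_
        have hx1 : x ∈ Ioo (0:ℝ) 1 := ⟨hx.1, hx.2.trans_le hσ.2⟩
        rw [hcleaf x (Ioo_subset_Icc_self hx1),
          one_div_sqrt_one_sub_pow_four_mul_cleafOfSleaf (by nlinarith [hx1.1, hx1.2])]
    _ = arctan (sleaf l) := by rw [integral_one_div_one_add_sq, arctan_zero, sub_zero]
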